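/- arXiv:2407.01504 — 6 statements merged into one kernel-verified Lean document; each statement's English description precedes it below -/
import Mathlib

section
/- The R2 indicator of the linear Pareto front {(t, 1−t) : t ∈ [0,1]} equals 1/6, i.e., ∫₀¹ (inf over t ∈ [0,1] of max(w·t, (1−w)·(1−t))) dw = ∫₀¹ w·(1−w) dw = 1/6. -/
lemma inf_eq_mul (w : ℝ) (hw : w ∈ Set.Icc (0:ℝ) 1) :
    (⨅ t : Set.Icc (0:ℝ) 1, max (w * (t : ℝ)) ((1 - w) * (1 - (t : ℝ)))) = w * (1 - w) := by
  obtain ⟨hw0, hw1⟩ := hw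
  have hbdd : BddBelow (Set.range fun t : Set.Icc (0:ℝ) 1 =>
      max (w * (t : ℝ)) ((1 - w) * (1 - (t : ℝ)))) := by
    refine ⟨0, ?_⟩
    rintro x ⟨⟨t, ht0, ht1⟩, rfl⟩
    exact le_max_of_le_left (by positivity)
  apply le_antisymm
  · have h := ciInf_le hbdd (⟨1 - w, by constructor <;> linarith⟩ : Set.Icc (0:ℝ) 1)
    simp only at h
    calc _ ≤ max (w * (1 - w)) ((1 - w) * (1 - (1 - w))) := h
      _ = w * (1 - w) := by rw [max_eq_left (le_of_eq (by ring))]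
  · apply le_ciInf
    intro ⟨t, ht0, ht1⟩
    simp only
    rcases le_total t (1 - w) with h | h
    · exact le_max_of_le_right (by nlinarith)
    · exact le_max_of_le_left (by nlinarith)

theorem r2_linear_front :
    (∫ w in (0:ℝ)..1, ⨅ t : Set.Icc (0:ℝ) 1, max (w * (t : ℝ)) ((1 - w) * (1 - (t : ℝ))))
      = 1/6 ∧
    (∫ w in (0:ℝ)..1, w * (1 - w)) = 1/6 := by
  have hint : (∫ w in (0:ℝ)..1, w * (1 - w)) = 1/6 := by
    have : (∫ w in (0:ℝ)..1, w * (1 - w)) = ∫ w in (0:ℝ)..1, (w^1 - w^2) := by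
      congr 1; ext w; ring
    rw [this, intervalIntegral.integral_sub (intervalIntegral.intervalIntegrable_pow 1)
      (intervalIntegral.intervalIntegrable_pow 2)]
    simp [integral_pow]
    norm_num
  refine ⟨?_, hint⟩
  rw [intervalIntegral.integral_congr (g := fun w => w * (1 - w)) ?_]
  · exact hint
  · intro w hw
    rw [Set.uIcc_of_le (by norm_num)] at hw
    exact inf_eq_mul w hw
end

section
/- The R2 indicator of the linear Pareto front with ideal point (0,0) and nadir point (0.5, 0.5), i.e., the set {(t, 0.5−t) : t ∈ [0, 0.5]}, equals 1/12. -/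
lemma inf_eq_aux (w : ℝ) (hw0 : 0 ≤ w) (hw1 : w ≤ 1) :
    (⨅ t : Set.Icc (0:ℝ) 0.5, max (w * (t : ℝ)) ((1 - w) * (0.5 - (t : ℝ))))
      = w * (1 - w) / 2 := by
  haveI : Nonempty (Set.Icc (0:ℝ) 0.5) := ⟨⟨0, by norm_num⟩⟩
  have hbdd : BddBelow (Set.range fun t : Set.Icc (0:ℝ) 0.5 =>
      max (w * (t : ℝ)) ((1 - w) * (0.5 - (t : ℝ)))) := by
    refine ⟨0, ?_⟩
    rintro x ⟨t, rfl⟩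
    have ht := t.2
    simp only [Set.mem_Icc] at ht
    have : 0 ≤ w * (t : ℝ) := mul_nonneg hw0 ht.1
    exact le_trans this (le_max_left _ _)
  apply le_antisymm
  · have hmem : (1 - w) / 2 ∈ Set.Icc (0:ℝ) 0.5 := by
      constructor <;> [nlinarith; nlinarith]
    have := ciInf_le hbdd (⟨(1 - w) / 2, hmem⟩ : Set.Icc (0:ℝ) 0.5)
    simp only at this
    calc (⨅ t : Set.Icc (0:ℝ) 0.5, max (w * (t : ℝ)) ((1 - w) * (0.5 - (t : ℝ))))
        ≤ max (w * ((1 - w) / 2)) ((1 - w) * (0.5 - (1 - w) / 2)) := this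
      _ = w * (1 - w) / 2 := by
          have h1 : w * ((1 - w) / 2) = w * (1 - w) / 2 := by ring
          have h2 : (1 - w) * (0.5 - (1 - w) / 2) = w * (1 - w) / 2 := by ring
          rw [h1, h2, max_self]
  · apply le_ciInf
    intro t
    have ht := t.2
    simp only [Set.mem_Icc] at ht
    have ha := le_max_left (w * (t : ℝ)) ((1 - w) * (0.5 - (t : ℝ)))
    have hb := le_max_right (w * (t : ℝ)) ((1 - w) * (0.5 - (t : ℝ)))
    nlinarith [ha, hb, ht.1, ht.2]

theorem r2_linear_front_dtlz1 :
    (∫ w in (0:ℝ)..1,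
        ⨅ t : Set.Icc (0:ℝ) 0.5, max (w * (t : ℝ)) ((1 - w) * (0.5 - (t : ℝ))))
      = 1/12 := by
  have hcong : ∀ w ∈ Set.uIcc (0:ℝ) 1,
      (⨅ t : Set.Icc (0:ℝ) 0.5, max (w * (t : ℝ)) ((1 - w) * (0.5 - (t : ℝ))))
        = w * (1 - w) / 2 := by
    intro w hw
    rw [Set.uIcc_of_le (by norm_num : (0:ℝ) ≤ 1), Set.mem_Icc] at hw
    exact inf_eq_aux w hw.1 hw.2
  rw [intervalIntegral.integral_congr hcong]
  have : (fun w : ℝ => w * (1 - w) / 2) = fun w : ℝ => (1/2) * w - (1/2) * w ^ 2 := by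
    funext w; ring
  rw [this]
  rw [intervalIntegral.integral_sub]
  · rw [intervalIntegral.integral_const_mul, intervalIntegral.integral_const_mul,
      integral_id, integral_pow]
    norm_num
  · exact (intervalIntegral.intervalIntegrable_id).const_mul _
  · exact ((intervalIntegral.intervalIntegrable_pow 2)).const_mul _
end

section
/- The R2 indicator of the convex Pareto front {(t, (1−√t)²) : t ∈ [0,1]} equals (3π − 8)/16. -/
/-!
With `s = √t` the two terms are `(√w s)²` and `(√(1 - w) (1 - s))²`, and the larger of the two
linear functions `√w s` and `√(1 - w) (1 - s)` is smallest where they cross; so the inner infimum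
is `w (1 - w) / (√w + √(1 - w))²`. The substitution `x = 2w - 1` turns this into
`(r - 1 + (1 + r)⁻¹) / 4` with `r = √(1 - x²)`. On `[-1, 1]`, `∫ r` is the area `π / 2` of the
half disc and `arcsin x - x / (1 + r)` is an antiderivative of `(1 + r)⁻¹`.
-/

open Real

lemma mul_div_add_le_max_mul_mul_one_sub {α β : ℝ} (hα : 0 ≤ α) (hβ : 0 ≤ β) (hαβ : 0 < α + β)
    (s : ℝ) : α * β / (α + β) ≤ max (α * s) (β * (1 - s)) := by
  rw [div_le_iff₀ hαβ]
  rcases le_total (β / (α + β)) s with h | h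
  · rw [div_le_iff₀ hαβ] at h
    have := le_max_left (α * s) (β * (1 - s))
    nlinarith
  · rw [le_div_iff₀ hαβ] at h
    have := le_max_right (α * s) (β * (1 - s))
    nlinarith

lemma max_mul_div_add_mul_one_sub_div_add {α β : ℝ} (hαβ : α + β ≠ 0) :
    max (α * (β / (α + β))) (β * (1 - β / (α + β))) = α * β / (α + β) := by
  have : β * (1 - β / (α + β)) = α * (β / (α + β)) := by field_simp; ring
  rw [this, max_self, mul_div_assoc]

lemma ciInf_max_mul_mul_one_sub_sqrt_sq {a b : ℝ} (ha : 0 ≤ a) (hb : 0 ≤ b) (hab : 0 < a + b) :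
    ⨅ t : Set.Icc (0:ℝ) 1, max (a * t) (b * (1 - √(t : ℝ)) ^ 2) = a * b / (√a + √b) ^ 2 := by
  set α := √a
  set β := √b
  have hαβ : 0 < α + β := by
    nlinarith [sq_sqrt ha, sq_sqrt hb, sqrt_nonneg a, sqrt_nonneg b]
  have hsq (t : ℝ) (ht0 : 0 ≤ t) (ht1 : t ≤ 1) :
      max (a * t) (b * (1 - √t) ^ 2) = max (α * √t) (β * (1 - √t)) ^ 2 := by
    have hs1 : √t ≤ 1 := sqrt_le_one.mpr ht1
    rw [(pow_left_monotoneOn (M₀ := ℝ) (n := 2)).map_max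
      (mul_nonneg (sqrt_nonneg a) (sqrt_nonneg t) : 0 ≤ α * √t)
      (mul_nonneg (sqrt_nonneg b) (by linarith) : 0 ≤ β * (1 - √t)), mul_pow, mul_pow,
      sq_sqrt ha, sq_sqrt hb, sq_sqrt ht0]
  have hval : a * b / (α + β) ^ 2 = (α * β / (α + β)) ^ 2 := by
    rw [div_pow, mul_pow, sq_sqrt ha, sq_sqrt hb]
  rw [hval]
  refine IsGLB.ciInf_eq (IsLeast.isGLB ⟨?_, ?_⟩)
  · set s₀ := β / (α + β)
    have hs0 : 0 ≤ s₀ := by positivity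
    have hs1 : s₀ ≤ 1 := by
      rw [div_le_one hαβ]; linarith [sqrt_nonneg a]
    refine ⟨⟨s₀ ^ 2, by positivity, pow_le_one₀ hs0 hs1⟩, ?_⟩
    dsimp only
    rw [hsq _ (by positivity) (pow_le_one₀ hs0 hs1), sqrt_sq hs0,
      max_mul_div_add_mul_one_sub_div_add hαβ.ne']
  · rintro _ ⟨⟨t, ht0, ht1⟩, rfl⟩
    dsimp only
    rw [hsq t ht0 ht1]
    exact pow_le_pow_left₀ (by positivity)
      (mul_div_add_le_max_mul_mul_one_sub (sqrt_nonneg a) (sqrt_nonneg b) hαβ _) 2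

lemma hasDerivAt_arcsin_sub_div_one_add_sqrt_one_sub_sq {x : ℝ} (hx₁ : -1 < x) (hx₂ : x < 1) :
    HasDerivAt (fun x => arcsin x - x / (1 + √(1 - x ^ 2))) (1 + √(1 - x ^ 2))⁻¹ x := by
  have hx : 0 < 1 - x ^ 2 := by nlinarith
  have hsqrt : HasDerivAt (fun x => √(1 - x ^ 2)) (-(2 * x) / (2 * √(1 - x ^ 2))) x := by
    simpa using ((hasDerivAt_pow 2 x).const_sub 1).sqrt hx.ne'
  have h := (hasDerivAt_arcsin hx₁.ne' hx₂.ne).fun_sub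
    ((hasDerivAt_id' x).fun_div (hsqrt.const_add 1) (by positivity))
  refine h.congr_deriv ?_
  have hr : 0 < √(1 - x ^ 2) := sqrt_pos.mpr hx
  have hr2 := sq_sqrt hx.le
  field_simp
  nlinarith

lemma continuous_inv_one_add_sqrt_one_sub_sq : Continuous fun x : ℝ => (1 + √(1 - x ^ 2))⁻¹ := by
  fun_prop (disch := intro x; positivity)

lemma integral_inv_one_add_sqrt_one_sub_sq : ∫ x in (-1:ℝ)..1, (1 + √(1 - x ^ 2))⁻¹ = π - 2 := by
  rw [intervalIntegral.integral_eq_sub_of_hasDerivAt_of_le (by norm_num)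
    (continuous_arcsin.sub (continuous_id.div (by fun_prop) fun x => by positivity)).continuousOn
    (fun x hx => hasDerivAt_arcsin_sub_div_one_add_sqrt_one_sub_sq hx.1 hx.2)
    (continuous_inv_one_add_sqrt_one_sub_sq.intervalIntegrable _ _)]
  norm_num
  ring

lemma integral_one_sub_sq_div_one_add_sqrt_one_sub_sq :
    ∫ x in (-1:ℝ)..1, (1 - x ^ 2) / (1 + √(1 - x ^ 2)) = 3 * π / 2 - 4 := by
  have hsplit : Set.EqOn (fun x : ℝ => (1 - x ^ 2) / (1 + √(1 - x ^ 2)))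
      (fun x => √(1 - x ^ 2) - 1 + (1 + √(1 - x ^ 2))⁻¹) (Set.uIcc (-1) 1) := by
    intro x hx
    rw [Set.uIcc_of_le (by norm_num)] at hx
    have hr2 := sq_sqrt (show 0 ≤ 1 - x ^ 2 by nlinarith [hx.1, hx.2])
    field_simp
    nlinarith
  have hsqrt : IntervalIntegrable (fun x : ℝ => √(1 - x ^ 2)) MeasureTheory.volume (-1) 1 := by
    apply Continuous.intervalIntegrable; fun_prop
  rw [intervalIntegral.integral_congr hsplit,
    intervalIntegral.integral_add (hsqrt.sub intervalIntegrable_const)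
      (continuous_inv_one_add_sqrt_one_sub_sq.intervalIntegrable _ _),
    intervalIntegral.integral_sub hsqrt intervalIntegrable_const,
    integral_sqrt_one_sub_sq, integral_inv_one_add_sqrt_one_sub_sq]
  norm_num
  ring

lemma integral_mul_one_sub_div_sqrt_add_sqrt_sq :
    ∫ w in (0:ℝ)..1, w * (1 - w) / (√w + √(1 - w)) ^ 2 = (3 * π - 8) / 16 := by
  have hsubst : Set.EqOn (fun w : ℝ => w * (1 - w) / (√w + √(1 - w)) ^ 2)
      (fun w => (1 - (2 * w - 1) ^ 2) / (1 + √(1 - (2 * w - 1) ^ 2)) / 4) (Set.uIcc 0 1) := by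
    intro w hw
    rw [Set.uIcc_of_le (by norm_num)] at hw
    have hw' : 0 ≤ 1 - w := by linarith [hw.2]
    have hden : (√w + √(1 - w)) ^ 2 = 1 + √(1 - (2 * w - 1) ^ 2) := by
      rw [show 1 - (2 * w - 1) ^ 2 = 2 ^ 2 * (w * (1 - w)) by ring,
        sqrt_mul (by norm_num), sqrt_sq (by norm_num), sqrt_mul hw.1, add_sq, sq_sqrt hw.1,
        sq_sqrt hw']
      ring
    simp only [hden]
    ring
  rw [intervalIntegral.integral_congr hsubst, intervalIntegral.integral_div,
    intervalIntegral.integral_comp_mul_sub (fun x => (1 - x ^ 2) / (1 + √(1 - x ^ 2))) two_ne_zero]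
  norm_num [integral_one_sub_sq_div_one_add_sqrt_one_sub_sq]
  ring

theorem r2_convex_front :
    (∫ w in (0:ℝ)..1,
        ⨅ t : Set.Icc (0:ℝ) 1, max (w * (t : ℝ)) ((1 - w) * (1 - Real.sqrt (t : ℝ))^2))
      = (3 * Real.pi - 8) / 16 := by
  have hinf : Set.EqOn
      (fun w : ℝ => ⨅ t : Set.Icc (0:ℝ) 1, max (w * (t : ℝ)) ((1 - w) * (1 - √(t : ℝ)) ^ 2))
      (fun w => w * (1 - w) / (√w + √(1 - w)) ^ 2) (Set.uIcc 0 1) := by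
    intro w hw
    rw [Set.uIcc_of_le zero_le_one] at hw
    exact ciInf_max_mul_mul_one_sub_sqrt_sq hw.1 (sub_nonneg.mpr hw.2) (by linarith)
  rw [intervalIntegral.integral_congr hinf, integral_mul_one_sub_div_sqrt_add_sqrt_sq]
end

section
/- The R2 indicator of the concave Pareto front {(t, √(1−t²)) : t ∈ [0,1]} equals (1/8)·(3·√2·arcsinh(1) − 2). -/
/-!
For fixed `w`, the function `t ↦ max (w t) ((1 - w) √(1 - t²))` on the quarter circle is minimised
where the two terms agree, i.e. at the point of the circle on the ray through `(1 - w, w)`; this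
gives the value `w (1 - w) / √(w² + (1 - w)²)`. Substituting `u = 2w - 1` turns this into a
multiple of `(1 - u²) / √(1 + u²)`, whose primitive `(3 arsinh u - u √(1 + u²)) / 2` is elementary.
-/

open Real

section QuarterCircle

variable {a b : ℝ}

lemma div_sqrt_sq_add_sq_sq_add_sq_le_one (a b : ℝ) :
    (a / √(a ^ 2 + b ^ 2)) ^ 2 + (b / √(a ^ 2 + b ^ 2)) ^ 2 ≤ 1 := by
  rw [div_pow, div_pow, ← add_div, sq_sqrt (by positivity)]
  exact div_self_le_one _

lemma mul_div_sqrt_sq_add_sq_le_max (ha : 0 ≤ a) (hb : 0 ≤ b) {t : ℝ} (ht : 0 ≤ t) :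
    a * b / √(a ^ 2 + b ^ 2) ≤ max (a * t) (b * √(1 - t ^ 2)) := by
  set s := √(a ^ 2 + b ^ 2)
  rcases le_total (b / s) t with hbt | htb
  · refine le_max_of_le_left ?_
    rw [mul_div_assoc]
    exact mul_le_mul_of_nonneg_left hbt ha
  · -- `(a / s, b / s)` is on the unit circle, so `t ≤ b / s` forces `√(1 - t²) ≥ a / s`.
    refine le_max_of_le_right ?_
    have hunit := div_sqrt_sq_add_sq_sq_add_sq_le_one a b
    have hts : t ^ 2 ≤ (b / s) ^ 2 := pow_le_pow_left₀ ht htb 2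
    have has : a / s ≤ √(1 - t ^ 2) :=
      (le_sqrt (by positivity) (by nlinarith)).2 (by linarith)
    rw [mul_comm a, mul_div_assoc]
    exact mul_le_mul_of_nonneg_left has hb

lemma max_mul_sqrt_one_sub_sq_eq_of_pos (ha : 0 ≤ a) (hb : 0 < b) :
    max (a * (b / √(a ^ 2 + b ^ 2))) (b * √(1 - (b / √(a ^ 2 + b ^ 2)) ^ 2))
      = a * b / √(a ^ 2 + b ^ 2) := by
  have hs : 0 < √(a ^ 2 + b ^ 2) := sqrt_pos.2 (by positivity)
  have hcirc : 1 - (b / √(a ^ 2 + b ^ 2)) ^ 2 = (a / √(a ^ 2 + b ^ 2)) ^ 2 := by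
    field_simp
    rw [sq_sqrt (by positivity)]
    ring
  rw [hcirc, sqrt_sq (div_nonneg ha hs.le)]
  rw [mul_div_assoc', mul_div_assoc', mul_comm b a, max_self]

lemma iInf_max_mul_sqrt_one_sub_sq (ha : 0 ≤ a) (hb : 0 ≤ b) :
    ⨅ t : Set.Icc (0 : ℝ) 1, max (a * t) (b * √(1 - (t : ℝ) ^ 2))
      = a * b / √(a ^ 2 + b ^ 2) := by
  have hlower (t : Set.Icc (0 : ℝ) 1) :=
    mul_div_sqrt_sq_add_sq_le_max ha hb t.2.1
  refine le_antisymm ?_ (le_ciInf hlower)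
  rcases hb.eq_or_lt with rfl | hb
  · refine (ciInf_le ⟨_, Set.forall_mem_range.2 hlower⟩ ⟨0, by simp⟩).trans_eq ?_
    simp
  · have hmem : b / √(a ^ 2 + b ^ 2) ∈ Set.Icc (0 : ℝ) 1 := by
      have := div_sqrt_sq_add_sq_sq_add_sq_le_one a b
      exact ⟨by positivity, by nlinarith [sq_nonneg (a / √(a ^ 2 + b ^ 2))]⟩
    exact (ciInf_le ⟨_, Set.forall_mem_range.2 hlower⟩ ⟨_, hmem⟩).trans_eq
      (max_mul_sqrt_one_sub_sq_eq_of_pos ha hb)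

end QuarterCircle

lemma hasDerivAt_three_mul_arsinh_sub_mul_sqrt (u : ℝ) :
    HasDerivAt (fun u => 3 * arsinh u - u * √(1 + u ^ 2))
      (2 * (1 - u ^ 2) / √(1 + u ^ 2)) u := by
  have hpos : 0 < 1 + u ^ 2 := by positivity
  have hsqrt : HasDerivAt (fun u => √(1 + u ^ 2)) ((2 * u) / (2 * √(1 + u ^ 2))) u := by
    have := ((hasDerivAt_pow 2 u).const_add 1).sqrt hpos.ne'
    simpa using this
  have h := ((hasDerivAt_id u).arsinh.const_mul 3).sub ((hasDerivAt_id u).mul hsqrt)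
  refine h.congr_deriv ?_
  simp only [id, smul_eq_mul, mul_one, one_mul]
  field_simp
  rw [sq_sqrt hpos.le]
  ring

lemma sq_add_one_sub_sq_pos (w : ℝ) : 0 < w ^ 2 + (1 - w) ^ 2 := by
  nlinarith [sq_nonneg (2 * w - 1)]

lemma integral_mul_one_sub_div_sqrt_sq_add_one_sub_sq :
    ∫ w in (0 : ℝ)..1, w * (1 - w) / √(w ^ 2 + (1 - w) ^ 2)
      = (1 / 8) * (3 * √2 * arsinh 1 - 2) := by
  set G := fun u : ℝ => 3 * arsinh u - u * √(1 + u ^ 2)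
  have hderiv (w : ℝ) : HasDerivAt (fun w => √2 / 16 * G (2 * w - 1))
      (w * (1 - w) / √(w ^ 2 + (1 - w) ^ 2)) w := by
    have hlin : HasDerivAt (fun w : ℝ => 2 * w - 1) 2 w := by
      simpa using ((hasDerivAt_id w).const_mul 2).sub_const 1
    refine (((hasDerivAt_three_mul_arsinh_sub_mul_sqrt (2 * w - 1)).comp w hlin).const_mul
      (√2 / 16)).congr_deriv ?_
    have hsplit : √(1 + (2 * w - 1) ^ 2) = √2 * √(w ^ 2 + (1 - w) ^ 2) := by
      rw [← sqrt_mul zero_le_two]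
      congr 1
      ring
    rw [hsplit]
    field_simp
    ring
  have hcont : Continuous fun w : ℝ => w * (1 - w) / √(w ^ 2 + (1 - w) ^ 2) := by
    fun_prop (disch := exact fun w => (sqrt_pos.2 (sq_add_one_sub_sq_pos w)).ne')
  rw [intervalIntegral.integral_eq_sub_of_hasDerivAt (fun w _ => hderiv w)
    (hcont.intervalIntegrable 0 1)]
  have h2 : √2 * √2 = 2 := mul_self_sqrt zero_le_two
  norm_num [G, arsinh_neg]
  linear_combination (-1 / 8 : ℝ) * h2

theorem r2_concave_front :
    (∫ w in (0:ℝ)..1,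
        ⨅ t : Set.Icc (0:ℝ) 1, max (w * (t : ℝ)) ((1 - w) * Real.sqrt (1 - (t : ℝ)^2)))
      = (1/8) * (3 * Real.sqrt 2 * Real.arsinh 1 - 2) := by
  rw [← integral_mul_one_sub_div_sqrt_sq_add_one_sub_sq]
  refine intervalIntegral.integral_congr fun w hw => ?_
  rw [Set.uIcc_of_le zero_le_one] at hw
  exact iInf_max_mul_sqrt_one_sub_sq hw.1 (sub_nonneg.2 hw.2)
end

section
/- If Y is a concave Pareto front in [0,1]² containing the boundary points (0,1) and (1,0) and lying weakly above the line y₁ + y₂ = 1 (i.e., y₁ + y₂ ≥ 1 for all y ∈ Y), with strict inequality for some point minimizing utility at some weight, then 1/6 < R2(Y) < 3/4; more weakly, 1/6 ≤ R2(Y) ≤ 3/4 always holds. -/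
/-!
Every point of the front lies on or above the line `y₁ + y₂ = 1`, so at weight `w ∈ [0,1]` its
Tchebycheff value `max (w y₁) ((1 - w) y₂)` dominates the convex combination
`(1 - w) (w y₁) + w ((1 - w) y₂) ≥ w (1 - w)`; the point `(0,1)` bounds the utility above by `1 - w`.
Integrating gives `1/6 ≤ R2(Y) ≤ 1/2`. The utility is 1-Lipschitz in `w`, hence continuous, so a strict
gap at one weight persists on an interval and makes the lower bound strict.
-/

open MeasureTheory

open scoped NNReal

/-- The integrand of the R2 indicator. -/
noncomputable def tchebycheffUtility (Y : Set (ℝ × ℝ)) (w : ℝ) : ℝ :=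
  ⨅ y : Y, max (w * (y : ℝ × ℝ).1) ((1 - w) * (y : ℝ × ℝ).2)

theorem LipschitzWith.ciInf {α ι : Type*} [PseudoMetricSpace α] [Nonempty ι] {f : ι → α → ℝ}
    {K : ℝ≥0} (hf : ∀ i, LipschitzWith K (f i)) (hbdd : ∀ x, BddBelow (Set.range fun i => f i x)) :
    LipschitzWith K fun x => ⨅ i, f i x := by
  refine LipschitzWith.of_le_add_mul K fun x y => ?_
  rw [← sub_le_iff_le_add]
  refine le_ciInf fun i => ?_
  rw [sub_le_iff_le_add]
  exact (ciInf_le (hbdd x) i).trans ((hf i).le_add_mul x y)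

theorem mul_le_abs_of_abs_le_one {t a : ℝ} (ha : |a| ≤ 1) : t * a ≤ |t| :=
  (le_abs_self _).trans (by rw [abs_mul]; exact mul_le_of_le_one_right (abs_nonneg t) ha)

theorem lipschitzWith_one_max_mul_mul_one_sub {a b : ℝ} (ha : |a| ≤ 1) (hb : |b| ≤ 1) :
    LipschitzWith 1 fun w : ℝ => max (w * a) ((1 - w) * b) := by
  refine LipschitzWith.of_le_add fun w w' => ?_
  have hA : (w - w') * a ≤ dist w w' := mul_le_abs_of_abs_le_one ha
  have hB : (w' - w) * b ≤ dist w w' := by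
    rw [Real.dist_eq, abs_sub_comm]; exact mul_le_abs_of_abs_le_one hb
  rw [← max_add_add_right]
  exact max_le_max (by linarith) (by linarith)

theorem neg_abs_le_max_mul_mul_one_sub {w a b : ℝ} (ha : |a| ≤ 1) :
    -|w| ≤ max (w * a) ((1 - w) * b) :=
  le_max_of_le_left <| neg_le.2 <| by
    simpa only [neg_mul, abs_neg] using mul_le_abs_of_abs_le_one (t := -w) ha

theorem mul_one_sub_le_max_of_one_le_add {w a b : ℝ} (hw : w ∈ Set.Icc (0 : ℝ) 1)
    (hab : 1 ≤ a + b) : w * (1 - w) ≤ max (w * a) ((1 - w) * b) := by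
  obtain ⟨hw0, hw1⟩ := hw
  have hw' : 0 ≤ 1 - w := by linarith
  calc w * (1 - w) ≤ w * (1 - w) * (a + b) := le_mul_of_one_le_right (by positivity) hab
    _ = (1 - w) * (w * a) + w * ((1 - w) * b) := by ring
    _ ≤ (1 - w) * max (w * a) ((1 - w) * b) + w * max (w * a) ((1 - w) * b) :=
        add_le_add (mul_le_mul_of_nonneg_left (le_max_left _ _) hw')
          (mul_le_mul_of_nonneg_left (le_max_right _ _) hw0)
    _ = max (w * a) ((1 - w) * b) := by ring

theorem abs_fst_le_one_of_mem_Icc {y : ℝ × ℝ} (hy : y ∈ Set.Icc (0, 0) (1, 1)) : |y.1| ≤ 1 :=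
  abs_le.2 ⟨by linarith [hy.1.1], hy.2.1⟩

theorem abs_snd_le_one_of_mem_Icc {y : ℝ × ℝ} (hy : y ∈ Set.Icc (0, 0) (1, 1)) : |y.2| ≤ 1 :=
  abs_le.2 ⟨by linarith [hy.1.2], hy.2.2⟩

section UnitBox

variable {Y : Set (ℝ × ℝ)} (hbox : Y ⊆ Set.Icc (0, 0) (1, 1))
include hbox

theorem bddBelow_range_max_mul_mul_one_sub (w : ℝ) :
    BddBelow (Set.range fun y : Y => max (w * (y : ℝ × ℝ).1) ((1 - w) * (y : ℝ × ℝ).2)) :=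
  ⟨-|w|, Set.forall_mem_range.2 fun y =>
    neg_abs_le_max_mul_mul_one_sub (abs_fst_le_one_of_mem_Icc (hbox y.2))⟩

theorem lipschitzWith_one_tchebycheffUtility [Nonempty Y] :
    LipschitzWith 1 (tchebycheffUtility Y) :=
  LipschitzWith.ciInf (fun y => lipschitzWith_one_max_mul_mul_one_sub
    (abs_fst_le_one_of_mem_Icc (hbox y.2)) (abs_snd_le_one_of_mem_Icc (hbox y.2)))
    (bddBelow_range_max_mul_mul_one_sub hbox)

theorem tchebycheffUtility_le_one_sub (h01 : ((0 : ℝ), (1 : ℝ)) ∈ Y) {w : ℝ} (hw : w ≤ 1) :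
    tchebycheffUtility Y w ≤ 1 - w := by
  calc tchebycheffUtility Y w ≤ max (w * 0) ((1 - w) * 1) :=
        ciInf_le (bddBelow_range_max_mul_mul_one_sub hbox w) ⟨_, h01⟩
    _ = 1 - w := by rw [mul_zero, mul_one, max_eq_right (sub_nonneg.2 hw)]

end UnitBox

theorem mul_one_sub_le_tchebycheffUtility {Y : Set (ℝ × ℝ)} [Nonempty Y]
    (habove : ∀ y ∈ Y, 1 ≤ y.1 + y.2) :
    ∀ w ∈ Set.Icc (0 : ℝ) 1, w * (1 - w) ≤ tchebycheffUtility Y w := fun _ hw =>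
  le_ciInf fun y => mul_one_sub_le_max_of_one_le_add hw (habove y y.2)

theorem integral_mul_one_sub : ∫ w in (0 : ℝ)..1, w * (1 - w) = 1 / 6 := by
  simp only [mul_sub, mul_one, ← sq]
  rw [intervalIntegral.integral_sub (Continuous.intervalIntegrable (by fun_prop) _ _)
    (Continuous.intervalIntegrable (by fun_prop) _ _), integral_id, integral_pow]
  norm_num

theorem integral_one_sub : ∫ w in (0 : ℝ)..1, (1 - w) = 1 / 2 := by
  rw [intervalIntegral.integral_sub (Continuous.intervalIntegrable (by fun_prop) _ _)
    (Continuous.intervalIntegrable (by fun_prop) _ _), integral_id,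
    intervalIntegral.integral_const]
  norm_num

theorem one_sixth_le_integral_of_mul_one_sub_le {F : ℝ → ℝ}
    (hF : IntervalIntegrable F volume 0 1) (hlow : ∀ w ∈ Set.Icc (0 : ℝ) 1, w * (1 - w) ≤ F w) :
    1 / 6 ≤ ∫ w in (0 : ℝ)..1, F w := by
  rw [← integral_mul_one_sub]
  exact intervalIntegral.integral_mono_on zero_le_one
    (Continuous.intervalIntegrable (by fun_prop) _ _) hF hlow

theorem one_sixth_lt_integral_of_mul_one_sub_lt {F : ℝ → ℝ} (hF : ContinuousOn F (Set.Icc 0 1))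
    (hlow : ∀ w ∈ Set.Icc (0 : ℝ) 1, w * (1 - w) ≤ F w)
    (hlt : ∃ w ∈ Set.Ioo (0 : ℝ) 1, w * (1 - w) < F w) :
    1 / 6 < ∫ w in (0 : ℝ)..1, F w := by
  obtain ⟨w₀, hw₀, hlt⟩ := hlt
  rw [← integral_mul_one_sub]
  exact intervalIntegral.integral_lt_integral_of_continuousOn_of_le_of_exists_lt zero_lt_one
    (by fun_prop) hF (fun w hw => hlow w (Set.Ioc_subset_Icc_self hw))
    ⟨w₀, Set.Ioo_subset_Icc_self hw₀, hlt⟩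

theorem integral_le_half_of_le_one_sub {F : ℝ → ℝ} (hF : IntervalIntegrable F volume 0 1)
    (hupp : ∀ w ∈ Set.Icc (0 : ℝ) 1, F w ≤ 1 - w) :
    ∫ w in (0 : ℝ)..1, F w ≤ 1 / 2 := by
  rw [← integral_one_sub]
  exact intervalIntegral.integral_mono_on zero_le_one hF
    (Continuous.intervalIntegrable (by fun_prop) _ _) hupp

theorem r2_concave_front_bounds_general (Y : Set (ℝ × ℝ))
    (hbox : Y ⊆ Set.Icc ((0:ℝ), (0:ℝ)) (1, 1))
    (h01 : ((0:ℝ), (1:ℝ)) ∈ Y)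
    (habove : ∀ y ∈ Y, 1 ≤ y.1 + y.2) :
    (1/6 ≤ ∫ w in (0:ℝ)..1, ⨅ y : Y, max (w * (y : ℝ × ℝ).1) ((1 - w) * (y : ℝ × ℝ).2)) ∧
    (∫ w in (0:ℝ)..1, ⨅ y : Y, max (w * (y : ℝ × ℝ).1) ((1 - w) * (y : ℝ × ℝ).2)) ≤ 3/4 ∧
    ((∃ w ∈ Set.Ioo (0:ℝ) 1,
        w * (1 - w) < ⨅ y : Y, max (w * (y : ℝ × ℝ).1) ((1 - w) * (y : ℝ × ℝ).2)) →
      (1/6 < ∫ w in (0:ℝ)..1, ⨅ y : Y, max (w * (y : ℝ × ℝ).1) ((1 - w) * (y : ℝ × ℝ).2)) ∧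
      (∫ w in (0:ℝ)..1, ⨅ y : Y, max (w * (y : ℝ × ℝ).1) ((1 - w) * (y : ℝ × ℝ).2)) < 3/4) := by
  have : Nonempty Y := ⟨⟨_, h01⟩⟩
  have hcont := (lipschitzWith_one_tchebycheffUtility hbox).continuous
  have hlow := mul_one_sub_le_tchebycheffUtility habove
  have hle : (∫ w in (0:ℝ)..1, tchebycheffUtility Y w) ≤ 1/2 :=
    integral_le_half_of_le_one_sub (hcont.intervalIntegrable _ _)
      fun w hw => tchebycheffUtility_le_one_sub hbox h01 hw.2
  exact ⟨one_sixth_le_integral_of_mul_one_sub_le (hcont.intervalIntegrable _ _) hlow,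
    hle.trans (by norm_num), fun hlt =>
      ⟨one_sixth_lt_integral_of_mul_one_sub_lt hcont.continuousOn hlow hlt,
        hle.trans_lt (by norm_num)⟩⟩

theorem r2_concave_front_bounds (Y : Set (ℝ × ℝ))
    (hbox : Y ⊆ Set.Icc ((0:ℝ), (0:ℝ)) (1, 1))
    (h01 : ((0:ℝ), (1:ℝ)) ∈ Y) (h10 : ((1:ℝ), (0:ℝ)) ∈ Y)
    (habove : ∀ y ∈ Y, 1 ≤ y.1 + y.2) :
    (1/6 ≤ ∫ w in (0:ℝ)..1, ⨅ y : Y, max (w * (y : ℝ × ℝ).1) ((1 - w) * (y : ℝ × ℝ).2)) ∧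
    (∫ w in (0:ℝ)..1, ⨅ y : Y, max (w * (y : ℝ × ℝ).1) ((1 - w) * (y : ℝ × ℝ).2)) ≤ 3/4 ∧
    ((∃ w ∈ Set.Ioo (0:ℝ) 1,
        w * (1 - w) < ⨅ y : Y, max (w * (y : ℝ × ℝ).1) ((1 - w) * (y : ℝ × ℝ).2)) →
      (1/6 < ∫ w in (0:ℝ)..1, ⨅ y : Y, max (w * (y : ℝ × ℝ).1) ((1 - w) * (y : ℝ × ℝ).2)) ∧
      (∫ w in (0:ℝ)..1, ⨅ y : Y, max (w * (y : ℝ × ℝ).1) ((1 - w) * (y : ℝ × ℝ).2)) < 3/4) :=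
  r2_concave_front_bounds_general Y hbox h01 habove
end

section
/- Pareto compliance of the exact R2 indicator for adding a strictly dominating point: if Y ⊆ (0,∞)² is a finite nonempty set and z ∈ (0,∞)² strictly dominates some y ∈ Y (i.e., z₁ < y₁ and z₂ < y₂) and z is not weakly dominated by any point of Y, then R2(Y ∪ {z}) < R2(Y). -/
/-!
Adding `z` replaces the integrand `w ↦ min_{y ∈ Y} tchebycheff w y` by its minimum with
`w ↦ tchebycheff w z`, so the integral cannot increase. At the weight `w` balancing the two
terms of `tchebycheff w z`, i.e. `w z₁ = (1 - w) z₂`, every `y` that does not weakly dominate `z`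
is strictly worse than `z`; the two continuous integrands therefore differ at `w`, and the
integral drops strictly.
-/

open Set

namespace Set.Finite

variable {α β : Type*} {s : Set α}

theorem ciInf_eq_inf' [ConditionallyCompleteLattice β] (hs : s.Finite) (hne : s.Nonempty)
    (f : α → β) : ⨅ a : s, f a = hs.toFinset.inf' (hs.toFinset_nonempty.2 hne) f := by
  rw [Finset.inf'_eq_csInf_image, hs.coe_toFinset, iInf, ← image_eq_range]

theorem ciInf_insert [ConditionallyCompleteLattice β] (hs : s.Finite) (hne : s.Nonempty)
    (a : α) (f : α → β) : ⨅ b : (insert a s : Set α), f b = f a ⊓ ⨅ b : s, f b := by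
  rw [iInf, iInf, ← image_eq_range, ← image_eq_range, image_insert_eq,
    csInf_insert (hs.image f).bddBelow (hne.image f)]

theorem continuous_ciInf {X : Type*} [TopologicalSpace X] [ConditionallyCompleteLattice β]
    [TopologicalSpace β] [ContinuousInf β] (hs : s.Finite) (hne : s.Nonempty) {f : X → α → β}
    (hf : ∀ a ∈ s, Continuous fun x ↦ f x a) : Continuous fun x ↦ ⨅ a : s, f x a := by
  simp_rw [hs.ciInf_eq_inf' hne]
  exact Continuous.finset_inf'_apply _ fun a ha ↦ hf a (hs.mem_toFinset.1 ha)

end Set.Finite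

def tchebycheff (w : ℝ) (y : ℝ × ℝ) : ℝ := max (w * y.1) ((1 - w) * y.2)

theorem continuous_tchebycheff (y : ℝ × ℝ) : Continuous fun w ↦ tchebycheff w y := by
  unfold tchebycheff; fun_prop

theorem exists_balanced_weight {z : ℝ × ℝ} (hz : 0 < z.1 ∧ 0 < z.2) :
    ∃ w ∈ Ioo (0 : ℝ) 1, w * z.1 = (1 - w) * z.2 := by
  have hsum : 0 < z.1 + z.2 := add_pos hz.1 hz.2
  refine ⟨z.2 / (z.1 + z.2), ⟨div_pos hz.2 hsum, (div_lt_one hsum).2 (by linarith)⟩, ?_⟩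
  field_simp
  ring

theorem tchebycheff_lt_of_balanced {w : ℝ} {y z : ℝ × ℝ} (hw : w ∈ Ioo (0 : ℝ) 1)
    (hbal : w * z.1 = (1 - w) * z.2) (hy : z.1 < y.1 ∨ z.2 < y.2) :
    tchebycheff w z < tchebycheff w y := by
  have hz : tchebycheff w z = w * z.1 := by rw [tchebycheff, hbal, max_self]
  rcases hy with h | h
  · calc tchebycheff w z = w * z.1 := hz
      _ < w * y.1 := mul_lt_mul_of_pos_left h hw.1
      _ ≤ tchebycheff w y := le_max_left _ _
  · calc tchebycheff w z = (1 - w) * z.2 := hz.trans hbal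
      _ < (1 - w) * y.2 := mul_lt_mul_of_pos_left h (sub_pos.2 hw.2)
      _ ≤ tchebycheff w y := le_max_right _ _

theorem r2_pareto_compliant_dominating_general (Y : Set (ℝ × ℝ)) (hfin : Y.Finite)
    (hne : Y.Nonempty)
    (z : ℝ × ℝ) (hz : 0 < z.1 ∧ 0 < z.2)
    (hnondom : ¬ ∃ y ∈ Y, y.1 ≤ z.1 ∧ y.2 ≤ z.2) :
    (∫ w in (0:ℝ)..1, ⨅ y : (insert z Y : Set (ℝ × ℝ)),
        max (w * (y : ℝ × ℝ).1) ((1 - w) * (y : ℝ × ℝ).2)) <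
    (∫ w in (0:ℝ)..1, ⨅ y : Y, max (w * (y : ℝ × ℝ).1) ((1 - w) * (y : ℝ × ℝ).2)) := by
  change (∫ w in (0:ℝ)..1, ⨅ y : (insert z Y : Set (ℝ × ℝ)), tchebycheff w y) <
    ∫ w in (0:ℝ)..1, ⨅ y : Y, tchebycheff w y
  obtain ⟨w, hw, hbal⟩ := exists_balanced_weight hz
  have hz_lt : tchebycheff w z < ⨅ y : Y, tchebycheff w y := by
    rw [hfin.ciInf_eq_inf' hne, Finset.lt_inf'_iff]
    intro y hy
    refine tchebycheff_lt_of_balanced hw hbal ?_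
    by_contra! hle
    exact hnondom ⟨y, hfin.mem_toFinset.1 hy, hle.1, hle.2⟩
  have hcont_insert := (hfin.insert z).continuous_ciInf (insert_nonempty z Y)
    fun y _ ↦ continuous_tchebycheff y
  have hcont := hfin.continuous_ciInf hne fun y _ ↦ continuous_tchebycheff y
  refine intervalIntegral.integral_lt_integral_of_continuousOn_of_le_of_exists_lt one_pos
    hcont_insert.continuousOn hcont.continuousOn (fun w _ ↦ ?_) ⟨w, Ioo_subset_Icc_self hw, ?_⟩
  · rw [hfin.ciInf_insert hne]
    exact inf_le_right
  · rw [hfin.ciInf_insert hne]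
    exact inf_lt_of_left_lt hz_lt

theorem r2_pareto_compliant_dominating (Y : Set (ℝ × ℝ)) (hfin : Y.Finite)
    (hne : Y.Nonempty) (hpos : ∀ y ∈ Y, 0 < y.1 ∧ 0 < y.2)
    (z : ℝ × ℝ) (hz : 0 < z.1 ∧ 0 < z.2)
    (hdominates : ∃ y ∈ Y, z.1 < y.1 ∧ z.2 < y.2)
    (hnondom : ¬ ∃ y ∈ Y, y.1 ≤ z.1 ∧ y.2 ≤ z.2) :
    (∫ w in (0:ℝ)..1, ⨅ y : (insert z Y : Set (ℝ × ℝ)),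
        max (w * (y : ℝ × ℝ).1) ((1 - w) * (y : ℝ × ℝ).2)) <
    (∫ w in (0:ℝ)..1, ⨅ y : Y, max (w * (y : ℝ × ℝ).1) ((1 - w) * (y : ℝ × ℝ).2)) :=
  r2_pareto_compliant_dominating_general Y hfin hne z hz hnondom
end
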